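/- The group presented by ⟨a, b | b⁻¹ab = ab⁻¹a⟩ is not isomorphic to ℤ. -/

import Mathlib

/-- The free group on two generators. -/
abbrev F : Type := FreeGroup (Fin 2)

/-- The generator `a`. -/
def a : F := FreeGroup.of 0

/-- The generator `b`. -/
def b : F := FreeGroup.of 1

/-- The relator set of `⟨a, b | b⁻¹ab = ab⁻¹a⟩`. -/
def rels : Set F := {b⁻¹ * a * b * (a * b⁻¹ * a)⁻¹}

/-!
Sending `a ↦ (0 1)` and `b ↦ (1 2)` respects the relation: for involutions it reads `bab = aba`,
the braid relation, which holds in `S₃`. The images of `a` and `b` do not commute, so neither do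
`a` and `b` in the presented group, which therefore is not abelian, unlike `ℤ`.
-/

open Equiv

theorem not_nonempty_mulEquiv_of_mul_ne_mul {G H : Type*} [Group G] [CommGroup H] {x y : G}
    (hxy : x * y ≠ y * x) : ¬ Nonempty (G ≃* H) := by
  rintro ⟨e⟩
  exact hxy (e.injective (by simp only [map_mul, mul_comm]))

def transpositionsS3 : Fin 2 → Perm (Fin 3) := ![swap 0 1, swap 1 2]

theorem lift_transpositionsS3_rels : ∀ r ∈ rels, FreeGroup.lift transpositionsS3 r = 1 := by
  rintro r rfl
  simp only [a, b, map_mul, map_inv, FreeGroup.lift_apply_of, transpositionsS3]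
  decide

theorem presentedGroup_rels_of_zero_mul_of_one_ne :
    PresentedGroup.of (rels := rels) 0 * PresentedGroup.of 1 ≠
      PresentedGroup.of 1 * PresentedGroup.of 0 := by
  intro hcomm
  have hS3 := congrArg (PresentedGroup.toGroup lift_transpositionsS3_rels) hcomm
  simp only [map_mul, PresentedGroup.toGroup.of, transpositionsS3] at hS3
  revert hS3
  decide

/-- The group presented by `⟨a, b | b⁻¹ab = ab⁻¹a⟩` is not isomorphic to `ℤ`. -/
theorem presentedGroup_61_c3c6_not_iso_int :
    ¬ Nonempty (PresentedGroup rels ≃* Multiplicative ℤ) :=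
  not_nonempty_mulEquiv_of_mul_ne_mul presentedGroup_rels_of_zero_mul_of_one_ne
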